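/- arXiv:1607.08495 — 2 statements merged into one kernel-verified Lean document; each statement's English description precedes it below -/
import Mathlib

section
/- Let x, y ∈ ℤ^∞ both satisfy the strict decrease condition x₁ > x₂ > ⋯ and y₁ > y₂ > ⋯ , and assume each of x, y either lies in some alcove or on some wall. Suppose |λ| < |μ| where x = λ_[n]+ρ and y = μ_[n]+ρ for partitions λ, μ, and y = s_{0,j}(x) for some j ≥ 1. Then x is in the j-th alcove and y is in the (j+1)-th alcove. -/
/-- Standard basis vector of `ℤ^∞`. -/
def eps (m : ℕ) : ℕ → ℤ := fun i => if i = m then 1 else 0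

/-- Transposition of coordinates `0` and `j` acting on `ℤ^∞`. -/
def swap0 (j : ℕ) (x : ℕ → ℤ) : ℕ → ℤ :=
  fun i => if i = 0 then x j else if i = j then x 0 else x i

/-- The tail coordinates `x₁ > x₂ > ⋯` are strictly decreasing. -/
def StrictTail (x : ℕ → ℤ) : Prop := ∀ i, 1 ≤ i → x (i + 1) < x i

/-- `x` is on the `j`-th wall (`j ≥ 1`). -/
def OnWall (x : ℕ → ℤ) (j : ℕ) : Prop := 1 ≤ j ∧ x 0 = x j

/-- `x` is in the `j`-th alcove: for `j = 1` this means `x₀ > x₁`;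
for `j > 1` it means `x_{j-1} > x₀ > x_j`. -/
def InAlcove (x : ℕ → ℤ) (j : ℕ) : Prop :=
  1 ≤ j ∧ (j = 1 → x 1 < x 0) ∧ (1 < j → x j < x 0 ∧ x 0 < x (j - 1))

/-- `x` is in the first alcove: all coordinates strictly decreasing. -/
def InFirstAlcove (x : ℕ → ℤ) : Prop := ∀ i, x (i + 1) < x i

/-- A partition, recorded as a finitely supported function with `λ_i` the `i`-th part
(for `i ≥ 1`; the value at `0` is unused and required to be `0`). -/
def IsPartition (l : ℕ →₀ ℕ) : Prop := l 0 = 0 ∧ ∀ i, 1 ≤ i → l (i + 1) ≤ l i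

/-- `|λ| = Σᵢ λᵢ`. -/
def psize (l : ℕ →₀ ℕ) : ℕ := l.sum fun _ v => v

/-- `λ_[n] = (n - |λ|, λ₁, λ₂, …) ∈ ℤ^∞`. -/
def lamBr (l : ℕ →₀ ℕ) (n : ℤ) : ℕ → ℤ :=
  fun i => if i = 0 then n - psize l else (l i : ℤ)

/-- `ρ = (0, -1, -2, -3, …)`. -/
def rho : ℕ → ℤ := fun i => -(i : ℤ)

/-- `λ_[n] + ρ`. -/
def vec (l : ℕ →₀ ℕ) (n : ℤ) : ℕ → ℤ := fun i => lamBr l n i + rho i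

/-- The embedding `φ_n` of the branching graph: `(λ,k) ↦ λ_[n]+ρ` for `k` even,
`λ_[n-1]+ρ` for `k` odd. -/
def phi (n : ℤ) (l : ℕ →₀ ℕ) (k : ℕ) : ℕ → ℤ :=
  if k % 2 = 0 then vec l n else vec l (n - 1)

/-- A vertex `(λ, k)` of the branching graph `Y`: `λ ⊢ l ≤ ⌊k/2⌋`. -/
def IsVertex (l : ℕ →₀ ℕ) (k : ℕ) : Prop := IsPartition l ∧ psize l ≤ k / 2

/-- An edge `(μ, k-1) → (λ, k)` of the branching graph `Y`: either `λ = μ`,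
or `k` even and `λ = μ ∪ {a}` for an addable node `a`, or `k` odd and
`λ = μ \ {a}` for a removable node `a`. -/
def BrEdge (mu lam : ℕ →₀ ℕ) (k : ℕ) : Prop :=
  lam = mu ∨
    (k % 2 = 0 ∧ ∃ j, 1 ≤ j ∧ (∀ m, m ≠ j → lam m = mu m) ∧ lam j = mu j + 1) ∨
    (k % 2 = 1 ∧ ∃ j, 1 ≤ j ∧ (∀ m, m ≠ j → lam m = mu m) ∧ mu j = lam j + 1)

/-! Since `y₀ = x_j` and `|λ| < |μ|`, we get `x_j = y₀ < x₀`. Strict decrease of the tail of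
`y = s_{0,j}(x)` gives `x₀ = y_j < y_{j-1} = x_{j-1}`, and strict decrease of the tail of `x` gives
`y_{j+1} = x_{j+1} < x_j = y₀ < x₀ = y_j`. -/

section Swap0

variable {j : ℕ} {x : ℕ → ℤ}

lemma swap0_apply_zero (j : ℕ) (x : ℕ → ℤ) : swap0 j x 0 = x j := rfl

lemma swap0_apply_self (hj : j ≠ 0) : swap0 j x j = x 0 := by
  simp [swap0, hj]

lemma swap0_apply_of_ne {i : ℕ} (hi : i ≠ 0) (hij : i ≠ j) : swap0 j x i = x i := by
  simp [swap0, hi, hij]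

lemma inAlcove_of_strictTail_swap0 (hj : 1 ≤ j) (hyt : StrictTail (swap0 j x))
    (hlt : x j < x 0) : InAlcove x j := by
  refine ⟨hj, fun h1 => h1 ▸ hlt, fun h1 => ⟨hlt, ?_⟩⟩
  have hstep := hyt (j - 1) (by omega)
  rwa [Nat.sub_add_cancel hj, swap0_apply_self (by omega),
    swap0_apply_of_ne (by omega) (by omega)] at hstep

lemma inAlcove_succ_swap0 (hj : 1 ≤ j) (hxt : StrictTail x) (hlt : x j < x 0) :
    InAlcove (swap0 j x) (j + 1) := by
  refine ⟨by omega, by omega, fun _ => ?_⟩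
  rw [Nat.add_sub_cancel, swap0_apply_zero, swap0_apply_self (by omega),
    swap0_apply_of_ne (by omega) (by omega)]
  exact ⟨hxt j hj, hlt⟩

end Swap0

lemma vec_apply_zero (l : ℕ →₀ ℕ) (n : ℤ) : vec l n 0 = n - psize l := by
  simp [vec, lamBr, rho]

lemma vec_apply_zero_lt_of_psize_lt {l m : ℕ →₀ ℕ} (n : ℤ) (hsize : psize l < psize m) :
    vec m n 0 < vec l n 0 := by
  rw [vec_apply_zero, vec_apply_zero]
  omega

theorem stmt4_general (l m : ℕ →₀ ℕ) (n : ℤ)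
    (j : ℕ) (hj : 1 ≤ j)
    (hxt : StrictTail (vec l n)) (hyt : StrictTail (vec m n))
    (hsize : psize l < psize m)
    (hrefl : vec m n = swap0 j (vec l n)) :
    InAlcove (vec l n) j ∧ InAlcove (vec m n) (j + 1) := by
  have hlt : vec l n j < vec l n 0 :=
    calc vec l n j = vec m n 0 := by rw [hrefl, swap0_apply_zero]
      _ < vec l n 0 := vec_apply_zero_lt_of_psize_lt n hsize
  rw [hrefl] at hyt ⊢
  exact ⟨inAlcove_of_strictTail_swap0 hj hyt hlt, inAlcove_succ_swap0 hj hxt hlt⟩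

theorem stmt4 (l m : ℕ →₀ ℕ) (hl : IsPartition l) (hm : IsPartition m) (n : ℤ)
    (j : ℕ) (hj : 1 ≤ j)
    (hxt : StrictTail (vec l n)) (hyt : StrictTail (vec m n))
    (hxpos : ∃ i, 1 ≤ i ∧ (InAlcove (vec l n) i ∨ OnWall (vec l n) i))
    (hypos : ∃ i, 1 ≤ i ∧ (InAlcove (vec m n) i ∨ OnWall (vec m n) i))
    (hsize : psize l < psize m)
    (hrefl : vec m n = swap0 j (vec l n)) :
    InAlcove (vec l n) j ∧ InAlcove (vec m n) (j + 1) :=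
  stmt4_general l m n j hj hxt hyt hsize hrefl
end

section
/- Let (λ, k) with λ a partition, |λ| ≤ ⌊k/2⌋, and suppose φ_n(λ,k) is in the j-th alcove. Suppose there is an edge (η, k−1) → (λ, k) in the branching graph with φ_n(η, k−1) on the j-th wall. Then: if k is even, λ = η and η with a box added in row j, μ := η + ε_j, is a partition with (μ, k) a vertex of Y; if k is odd, λ = η with a box removed from row j and μ := η gives a vertex (μ, k) of Y. In both cases (η, k−1) → (μ, k) is an edge of Y and φ_n(μ, k) = s_{0,j}(φ_n(λ, k)). -/
/-!
Write `x = φ_n(λ,k)` and `y = φ_n(η,k-1)`. The parity of `k` decides whether `x₀` is computed with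
`n` or `n - 1`, and an edge changes `|λ|` by at most one, so `x₀ - y₀` is explicit in each case of the
edge. Comparing it with the wall equation `y₀ = y_j` and the alcove inequality `x_j < x₀` rules out
every edge except `λ = η` (k even) and `η = λ + ε_j` (k odd). In both cases the wall equation says
that the `0`-th and `j`-th coordinates of the relevant `λ_[·] + ρ` differ by exactly one, and adding a
box in row `j` to such a vector is precisely the transposition `s_{0,j}`.
-/

lemma psize_add_single (a : ℕ →₀ ℕ) (j : ℕ) :
    psize (a + Finsupp.single j 1) = psize a + 1 := by
  unfold psize
  rw [Finsupp.sum_add_index' (fun _ => rfl) (fun _ _ _ => rfl), Finsupp.sum_single_index rfl]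

lemma eq_add_single_one {a b : ℕ →₀ ℕ} {j : ℕ}
    (hne : ∀ m, m ≠ j → b m = a m) (hj : b j = a j + 1) :
    b = a + Finsupp.single j 1 := by
  ext m
  rcases eq_or_ne m j with rfl | hm
  · simp [hj]
  · simp [Finsupp.single_eq_of_ne hm, hne m hm]

lemma vec_zero (a : ℕ →₀ ℕ) (n : ℤ) : vec a n 0 = n - psize a := by
  simp [vec, lamBr, rho]

lemma vec_of_ne_zero (a : ℕ →₀ ℕ) (n : ℤ) {i : ℕ} (hi : i ≠ 0) :
    vec a n i = a i - i := by
  simp [vec, lamBr, rho, hi, sub_eq_add_neg]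

lemma vec_zero_eq_add_one_of_sub_one {a : ℕ →₀ ℕ} {n : ℤ} {j : ℕ} (hj : j ≠ 0)
    (hwall : vec a (n - 1) 0 = vec a (n - 1) j) : vec a n 0 = vec a n j + 1 := by
  rw [vec_zero, vec_of_ne_zero _ _ hj] at hwall ⊢
  omega

lemma vec_zero_eq_add_one_of_add_single {a : ℕ →₀ ℕ} {n : ℤ} {j : ℕ} (hj : j ≠ 0)
    (hwall : vec (a + Finsupp.single j 1) n 0 = vec (a + Finsupp.single j 1) n j) :
    vec a (n - 1) 0 = vec a (n - 1) j + 1 := by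
  rw [vec_zero, vec_of_ne_zero _ _ hj, psize_add_single, Finsupp.add_apply,
    Finsupp.single_eq_same] at hwall
  rw [vec_zero, vec_of_ne_zero _ _ hj]
  push_cast at hwall
  omega

lemma vec_add_single_eq_swap0 (a : ℕ →₀ ℕ) (n : ℤ) {j : ℕ} (hj : j ≠ 0)
    (hstep : vec a n 0 = vec a n j + 1) :
    vec (a + Finsupp.single j 1) n = swap0 j (vec a n) := by
  rw [vec_zero, vec_of_ne_zero a n hj] at hstep
  funext i
  rcases eq_or_ne i 0 with rfl | hi0
  · simp only [swap0, ↓reduceIte, vec_zero, psize_add_single, vec_of_ne_zero a n hj]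
    push_cast
    omega
  rcases eq_or_ne i j with rfl | hij
  · simp only [swap0, hi0, ↓reduceIte, vec_zero, vec_of_ne_zero _ n hi0, Finsupp.add_apply,
      Finsupp.single_eq_same]
    push_cast
    omega
  · simp [swap0, vec_of_ne_zero _ n hi0, hi0, hij, Finsupp.single_eq_of_ne hij]

lemma phi_of_even (n : ℤ) (a : ℕ →₀ ℕ) {k : ℕ} (hk : k % 2 = 0) : phi n a k = vec a n := by
  simp [phi, hk]

lemma phi_of_odd (n : ℤ) (a : ℕ →₀ ℕ) {k : ℕ} (hk : k % 2 = 1) :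
    phi n a k = vec a (n - 1) := by
  simp [phi, hk]

lemma InAlcove.lt_zero {x : ℕ → ℤ} {j : ℕ} (h : InAlcove x j) : x j < x 0 := by
  obtain ⟨hj, h1, h2⟩ := h
  rcases eq_or_lt_of_le hj with rfl | hj1
  · exact h1 rfl
  · exact (h2 hj1).1

lemma InAlcove.addable {a : ℕ →₀ ℕ} {n : ℤ} {j : ℕ} (halc : InAlcove (vec a n) j)
    (hstep : vec a n 0 = vec a n j + 1) : 1 < j → a j < a (j - 1) := fun hj1 => by
  have := (halc.2.2 hj1).2
  rw [hstep, vec_of_ne_zero _ _ (by omega), vec_of_ne_zero _ _ (by omega)] at this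
  omega

lemma IsPartition.add_single {a : ℕ →₀ ℕ} (ha : IsPartition a) {j : ℕ} (hj : j ≠ 0)
    (haddable : 1 < j → a j < a (j - 1)) : IsPartition (a + Finsupp.single j 1) := by
  refine ⟨by simp [ha.1, Finsupp.single_eq_of_ne' hj], fun i hi => ?_⟩
  have hmono := ha.2 i hi
  simp only [Finsupp.add_apply, Finsupp.single_apply]
  rcases eq_or_ne j (i + 1) with rfl | hij
  · have := haddable (by omega)
    simp only [add_tsub_cancel_right] at this
    rw [if_pos rfl, if_neg (by omega)]
    omega
  · split_ifs <;> omega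

lemma IsVertex.mono {a : ℕ →₀ ℕ} {k k' : ℕ} (ha : IsVertex a k') (hk : k' ≤ k) : IsVertex a k :=
  ⟨ha.1, ha.2.trans (Nat.div_le_div_right hk)⟩

lemma IsVertex.add_single {a : ℕ →₀ ℕ} {k j : ℕ} (ha : IsVertex a (k - 1)) (hk : k % 2 = 0)
    (hk1 : 1 ≤ k) (hj : j ≠ 0) (haddable : 1 < j → a j < a (j - 1)) :
    IsVertex (a + Finsupp.single j 1) k := by
  refine ⟨ha.1.add_single hj haddable, ?_⟩
  rw [psize_add_single]
  have := ha.2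
  omega

lemma brEdge_add_single (a : ℕ →₀ ℕ) {k j : ℕ} (hk : k % 2 = 0) (hj : 1 ≤ j) :
    BrEdge a (a + Finsupp.single j 1) k :=
  Or.inr <| Or.inl ⟨hk, j, hj, fun m hm => by simp [Finsupp.single_eq_of_ne hm], by simp⟩

/-- For `k` even, adding a box to `η` keeps the first coordinate, so `x₀ = y₀ = y_j ≤ x_j`. -/
lemma eq_of_brEdge_of_even {eta l : ℕ →₀ ℕ} {k j : ℕ} {n : ℤ} (hk : k % 2 = 0)
    (hedge : BrEdge eta l k) (hj : j ≠ 0) (hlt : vec l n j < vec l n 0)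
    (hwall : vec eta (n - 1) 0 = vec eta (n - 1) j) : l = eta := by
  rw [vec_zero, vec_of_ne_zero _ _ hj] at hlt hwall
  rcases hedge with rfl | ⟨-, i, -, hne, hi⟩ | ⟨hk', -⟩
  · rfl
  · have hsize : psize l = psize eta + 1 := by rw [eq_add_single_one hne hi, psize_add_single]
    have hle : eta j ≤ l j := by
      rcases eq_or_ne j i with rfl | hji
      · omega
      · rw [hne j hji]
    omega
  · omega

/-- For `k` odd, `x₀ = y₀ + (|η| - |λ|) - 1`; with `y₀ = y_j` only a box of `η` in row `j` gives
`x_j < x₀`. -/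
lemma eq_add_single_of_brEdge_of_odd {eta l : ℕ →₀ ℕ} {k j : ℕ} {n : ℤ} (hk : k % 2 = 1)
    (hedge : BrEdge eta l k) (hj : j ≠ 0) (hlt : vec l (n - 1) j < vec l (n - 1) 0)
    (hwall : vec eta n 0 = vec eta n j) : eta = l + Finsupp.single j 1 := by
  rw [vec_zero, vec_of_ne_zero _ _ hj] at hlt hwall
  rcases hedge with rfl | ⟨hk', -⟩ | ⟨-, i, -, hne, hi⟩
  · omega
  · omega
  · have heta := eq_add_single_one (fun m hm => (hne m hm).symm) hi
    have hsize : psize eta = psize l + 1 := by rw [heta, psize_add_single]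
    obtain rfl : i = j := by
      by_contra hij
      have := hne j (Ne.symm hij)
      omega
    exact heta

theorem stmt11_general (n : ℤ) (k : ℕ) (hk : 1 ≤ k) (l eta : ℕ →₀ ℕ) (j : ℕ)
    (hev : IsVertex eta (k - 1))
    (halc : InAlcove (phi n l k) j)
    (hedge : BrEdge eta l k)
    (hwall : OnWall (phi n eta (k - 1)) j) :
    ∃ mu : ℕ →₀ ℕ, IsVertex mu k ∧ BrEdge eta mu k ∧
      phi n mu k = swap0 j (phi n l k) ∧
      (k % 2 = 0 → l = eta ∧ mu = eta + Finsupp.single j 1) ∧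
      (k % 2 = 1 → eta = l + Finsupp.single j 1 ∧ mu = eta) := by
  obtain ⟨hj, hwall⟩ := hwall
  have hj0 : j ≠ 0 := by omega
  rcases Nat.mod_two_eq_zero_or_one k with hke | hko
  · rw [phi_of_odd n eta (by omega)] at hwall
    simp only [phi_of_even n _ hke] at halc ⊢
    obtain rfl := eq_of_brEdge_of_even hke hedge hj0 halc.lt_zero hwall
    have hstep := vec_zero_eq_add_one_of_sub_one hj0 hwall
    exact ⟨l + Finsupp.single j 1, hev.add_single hke hk hj0 (halc.addable hstep),
      brEdge_add_single l hke hj, vec_add_single_eq_swap0 l n hj0 hstep, fun _ => ⟨rfl, rfl⟩,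
      by omega⟩
  · rw [phi_of_even n eta (by omega)] at hwall
    simp only [phi_of_odd n _ hko] at halc ⊢
    obtain rfl := eq_add_single_of_brEdge_of_odd hko hedge hj0 halc.lt_zero hwall
    exact ⟨_, hev.mono (Nat.sub_le k 1), Or.inl rfl,
      vec_add_single_eq_swap0 l (n - 1) hj0 (vec_zero_eq_add_one_of_add_single hj0 hwall),
      by omega, fun _ => ⟨rfl, rfl⟩⟩

theorem stmt11 (n : ℤ) (k : ℕ) (hk : 1 ≤ k) (l eta : ℕ →₀ ℕ) (j : ℕ)
    (hlv : IsVertex l k) (hev : IsVertex eta (k - 1))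
    (halc : InAlcove (phi n l k) j)
    (hedge : BrEdge eta l k)
    (hwall : OnWall (phi n eta (k - 1)) j) :
    ∃ mu : ℕ →₀ ℕ, IsVertex mu k ∧ BrEdge eta mu k ∧
      phi n mu k = swap0 j (phi n l k) ∧
      (k % 2 = 0 → l = eta ∧ mu = eta + Finsupp.single j 1) ∧
      (k % 2 = 1 → eta = l + Finsupp.single j 1 ∧ mu = eta) :=
  stmt11_general n k hk l eta j hev halc hedge hwall
end
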